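/- arXiv:2203.15797 — 11 statements merged into one kernel-verified Lean document; each statement's English description precedes it below -/
import Mathlib

section
/- Let Θ ⊆ ℝ^p be a convex set, let θ* ∈ Θ, let v ∈ ℝ^p, and let ε > 0. Then the following two conditions are equivalent: (i) the infimum distance from the origin to the set v + N_Θ(θ*) = {v + u : u ∈ N_Θ(θ*)} is at most ε; (ii) ⟨v, θ − θ*⟩ ≥ −ε‖θ − θ*‖ for every θ ∈ Θ (equivalently, −inf over θ ∈ Θ \ {θ*} of ⟨v, (θ − θ*)/‖θ − θ*‖⟩ is at most ε). -/
/-!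
If `u ∈ N_Θ(θ*)` then `⟪v, θ - θ*⟫ ≥ ⟪v + u, θ - θ*⟫ ≥ -‖v + u‖ ‖θ - θ*‖`, which gives (i) ⇒ (ii).
Conversely, let `K` be the closed tangent cone of `Θ` at `θ*`, the closure of `⋃_{c > 0} c (Θ - θ*)`.
Projecting `-v` onto `K` gives Moreau's decomposition `-v = z + u` with `z ∈ K`, `u` in the polar
of `K` (hence in `N_Θ(θ*)`) and `⟪u, z⟫ = 0`. Then `v + u = -z` and `⟪v, z⟫ = -‖z‖²`, while (ii)
extends to `K` by homogeneity and continuity, so `‖z‖² ≤ ε ‖z‖`.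
-/

open scoped InnerProductSpace

open Metric

variable {E : Type*} [NormedAddCommGroup E] [InnerProductSpace ℝ E]

def normalCone (Θ : Set E) (θs : E) : Set E := {u | ∀ θ ∈ Θ, ⟪u, θ - θs⟫_ℝ ≤ 0}

theorem ConvexCone.exists_moreau_decomposition [CompleteSpace E] (K : ConvexCone ℝ E)
    (hK : IsClosed (K : Set E)) (hne : (K : Set E).Nonempty) (x : E) :
    ∃ z ∈ K, ⟪x - z, z⟫_ℝ = 0 ∧ ∀ w ∈ K, ⟪x - z, w⟫_ℝ ≤ 0 := by
  obtain ⟨z, hz, hmin⟩ := exists_norm_eq_iInf_of_complete_convex hne hK.isComplete K.convex x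
  have hproj : ∀ w ∈ K, ⟪x - z, w - z⟫_ℝ ≤ 0 :=
    (norm_eq_iInf_iff_real_inner_le_zero K.convex hz).mp hmin
  -- `z` can be scaled both up and down inside the cone, which forces `⟪x - z, z⟫ = 0`.
  have hdouble := hproj _ (K.smul_mem two_pos hz)
  have hhalf := hproj _ (K.smul_mem (inv_pos.mpr two_pos) hz)
  rw [show (2 : ℝ) • z - z = z by module] at hdouble
  rw [show (2⁻¹ : ℝ) • z - z = (-2⁻¹ : ℝ) • z by module, real_inner_smul_right] at hhalf
  have horth : ⟪x - z, z⟫_ℝ = 0 := by linarith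
  refine ⟨z, hz, horth, fun w hw => ?_⟩
  have hw' := hproj w hw
  rwa [inner_sub_right, horth, sub_zero] at hw'

theorem neg_mul_norm_le_inner_of_mem_closure_hull {s : Set E} (hs : Convex ℝ s) {v : E}
    {ε : ℝ} (h : ∀ d ∈ s, -ε * ‖d‖ ≤ ⟪v, d⟫_ℝ) :
    ∀ w ∈ (ConvexCone.hull ℝ s).closure, -ε * ‖w‖ ≤ ⟪v, w⟫_ℝ := by
  have hclosed : IsClosed {w : E | -ε * ‖w‖ ≤ ⟪v, w⟫_ℝ} :=
    isClosed_le (by fun_prop) (by fun_prop)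
  refine fun w hw => closure_minimal (fun w hw => ?_) hclosed hw
  obtain ⟨c, hc, d, hd, rfl⟩ := (ConvexCone.mem_hull_of_convex hs).1 hw
  rw [Set.mem_ofPred_eq, norm_smul, real_inner_smul_right, Real.norm_of_nonneg hc.le]
  calc -ε * (c * ‖d‖) = c * (-ε * ‖d‖) := by ring
    _ ≤ c * ⟪v, d⟫_ℝ := mul_le_mul_of_nonneg_left (h d hd) hc.le

theorem neg_infDist_mul_norm_le_inner {Θ : Set E} {θs θ : E} (v : E) (hθ : θ ∈ Θ) :
    -infDist 0 {x | ∃ u ∈ normalCone Θ θs, x = v + u} * ‖θ - θs‖ ≤ ⟪v, θ - θs⟫_ℝ := by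
  set S := {x | ∃ u ∈ normalCone Θ θs, x = v + u}
  by_cases hd : θ - θs = 0
  · simp [hd]
  have hpos : 0 < ‖θ - θs‖ := norm_pos_iff.mpr hd
  have hne : S.Nonempty := ⟨v, 0, fun _ _ => by simp, by simp⟩
  have key : -⟪v, θ - θs⟫_ℝ / ‖θ - θs‖ ≤ infDist 0 S := by
    refine (le_infDist hne).2 ?_
    rintro _ ⟨u, hu, rfl⟩
    rw [dist_zero_left, div_le_iff₀ hpos]
    calc -⟪v, θ - θs⟫_ℝ ≤ -⟪v + u, θ - θs⟫_ℝ := by rw [inner_add_left]; linarith [hu θ hθ]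
      _ ≤ |⟪v + u, θ - θs⟫_ℝ| := neg_le_abs _
      _ ≤ ‖v + u‖ * ‖θ - θs‖ := abs_real_inner_le_norm _ _
  linarith [(div_le_iff₀ hpos).1 key]

theorem exists_mem_normalCone_norm_add_le [CompleteSpace E] {Θ : Set E} (hΘ : Convex ℝ Θ)
    {θs : E} (hθs : θs ∈ Θ) {v : E} {ε : ℝ} (hε : 0 ≤ ε)
    (h : ∀ θ ∈ Θ, -ε * ‖θ - θs‖ ≤ ⟪v, θ - θs⟫_ℝ) :
    ∃ u ∈ normalCone Θ θs, ‖v + u‖ ≤ ε := by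
  have hT := hΘ.translate_preimage_left θs
  set K := (ConvexCone.hull ℝ ((· + θs) ⁻¹' Θ)).closure
  have hmem : ∀ θ ∈ Θ, θ - θs ∈ K := fun θ hθ =>
    subset_closure <| ConvexCone.subset_hull (by simpa using hθ)
  obtain ⟨z, hzK, horth, hpolar⟩ :=
    K.exists_moreau_decomposition isClosed_closure ⟨_, hmem θs hθs⟩ (-v)
  refine ⟨-v - z, fun θ hθ => hpolar _ (hmem θ hθ), ?_⟩
  have hbound := neg_mul_norm_le_inner_of_mem_closure_hull hT
    (fun d hd => by simpa using h _ hd) z hzK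
  have hvz : ⟪v, z⟫_ℝ = -‖z‖ ^ 2 := by
    rw [inner_sub_left, inner_neg_left, real_inner_self_eq_norm_sq] at horth
    linarith
  rw [show v + (-v - z) = -z by abel, norm_neg]
  nlinarith [norm_nonneg z]

/-- For a convex set `Θ ⊆ ℝ^p`, `θ* ∈ Θ`, `v ∈ ℝ^p` and `ε > 0`, the
infimum distance from the origin to the set `v + N_Θ(θ*)` is at most `ε` iff
`⟨v, θ − θ*⟩ ≥ −ε‖θ − θ*‖` for every `θ ∈ Θ`. -/
theorem stmt0 (p : ℕ) (Θ : Set (EuclideanSpace ℝ (Fin p))) (hΘ : Convex ℝ Θ)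
    (θs : EuclideanSpace ℝ (Fin p)) (hθs : θs ∈ Θ)
    (v : EuclideanSpace ℝ (Fin p)) (ε : ℝ) (hε : 0 < ε) :
    Metric.infDist 0 {x | ∃ u, (∀ θ ∈ Θ, ⟪u, θ - θs⟫_ℝ ≤ 0) ∧ x = v + u} ≤ ε ↔
      ∀ θ ∈ Θ, -ε * ‖θ - θs‖ ≤ ⟪v, θ - θs⟫_ℝ := by
  change infDist 0 {x | ∃ u ∈ normalCone Θ θs, x = v + u} ≤ ε ↔ _
  set S := {x | ∃ u ∈ normalCone Θ θs, x = v + u}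
  refine ⟨fun h θ hθ => ?_, fun h => ?_⟩
  · calc -ε * ‖θ - θs‖ ≤ -infDist 0 S * ‖θ - θs‖ := by gcongr
      _ ≤ ⟪v, θ - θs⟫_ℝ := neg_infDist_mul_norm_le_inner v hθ
  · obtain ⟨u, hu, hle⟩ := exists_mem_normalCone_norm_add_le hΘ hθs hε.le h
    calc infDist 0 S ≤ dist 0 (v + u) := infDist_le_dist_of_mem ⟨u, hu, rfl⟩
      _ = ‖v + u‖ := dist_zero_left _
      _ ≤ ε := hle
end

section
/- Let (a_n)_{n≥0} and (b_n)_{n≥0} be sequences of nonnegative real numbers such that the series ∑_{n=0}^∞ a_n b_n converges, ∑_{n=0}^∞ a_n = ∞ (the partial sums tend to infinity), and there exists a constant C > 0 with |b_{n+1} − b_n| ≤ C·a_n for all n. Then b_n → 0 as n → ∞. -/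
/-!
If `b n ≥ ε`, then `b` stays above `ε / 2` as long as the `a`-mass accumulated since `n` is at
most `η = ε / (2C)`. Since `∑ a` diverges, this mass eventually exceeds `η`, so the block of
`∑ a b` starting at `n` is at least `ε η / 2`. Blocks of a convergent series become arbitrarily
small, hence `b n ≥ ε` can only happen for finitely many `n`.
-/

open Filter Finset Topology

theorem Summable.eventually_sum_Ico_mem {E : Type*} [AddCommGroup E] [TopologicalSpace E]
    [IsTopologicalAddGroup E] {f : ℕ → E} (hf : Summable f) {e : Set E} (he : e ∈ 𝓝 0) :
    ∀ᶠ n in atTop, ∀ m, ∑ k ∈ Ico n m, f k ∈ e := by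
  obtain ⟨s, hs⟩ := hf.vanishing he
  obtain ⟨N, hsN⟩ := s.exists_nat_subset_range
  filter_upwards [eventually_ge_atTop N] with n hn m
  refine hs _ (disjoint_left.2 fun k hk hks => ?_)
  have := mem_range.1 (hsN hks)
  have := (mem_Ico.1 hk).1
  omega

section

variable {a b : ℕ → ℝ} {C : ℝ}

theorem exists_lt_sum_Ico_of_tendsto_atTop
    (hdiv : Tendsto (fun n => ∑ k ∈ range n, a k) atTop atTop) (n : ℕ) (η : ℝ) :
    ∃ m, η < ∑ k ∈ Ico n m, a k := by
  obtain ⟨m, hm, hnm⟩ :=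
    ((hdiv.eventually_gt_atTop (η + ∑ k ∈ range n, a k)).and (eventually_ge_atTop n)).exists
  exact ⟨m, by rw [sum_Ico_eq_sub _ hnm]; linarith⟩

theorem abs_sub_le_mul_sum_Ico (hinc : ∀ n, |b (n + 1) - b n| ≤ C * a n) {n j : ℕ}
    (hnj : n ≤ j) : |b j - b n| ≤ C * ∑ k ∈ Ico n j, a k := by
  rw [← Real.dist_eq, dist_comm, mul_sum]
  exact dist_le_Ico_sum_of_dist_le hnj fun {k} _ _ => by
    rw [Real.dist_eq, abs_sub_comm]
    exact hinc k

theorem exists_le_sum_Ico_mul (ha : ∀ n, 0 ≤ a n) (hC : 0 ≤ C)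
    (hdiv : Tendsto (fun n => ∑ k ∈ range n, a k) atTop atTop)
    (hinc : ∀ n, |b (n + 1) - b n| ≤ C * a n) (n : ℕ) {η : ℝ} (hbn : C * η ≤ b n) :
    ∃ m, η * (b n - C * η) ≤ ∑ k ∈ Ico n m, a k * b k := by
  classical
  have hex := exists_lt_sum_Ico_of_tendsto_atTop hdiv n η
  refine ⟨Nat.find hex, ?_⟩
  set m := Nat.find hex
  have hmass : η < ∑ k ∈ Ico n m, a k := Nat.find_spec hex
  have hlow : ∀ j ∈ Ico n m, b n - C * η ≤ b j := by
    intro j hj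
    obtain ⟨hnj, hjm⟩ := mem_Ico.1 hj
    have hmass_j : ∑ k ∈ Ico n j, a k ≤ η := not_lt.1 (Nat.find_min hex hjm)
    have hdist := (abs_le.1 (abs_sub_le_mul_sum_Ico hinc hnj)).1
    calc b n - C * η ≤ b n - C * ∑ k ∈ Ico n j, a k := by gcongr
      _ ≤ b j := by linarith
  calc η * (b n - C * η) ≤ (∑ k ∈ Ico n m, a k) * (b n - C * η) :=
        mul_le_mul_of_nonneg_right hmass.le (sub_nonneg.2 hbn)
    _ = ∑ k ∈ Ico n m, a k * (b n - C * η) := sum_mul _ _ _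
    _ ≤ ∑ k ∈ Ico n m, a k * b k :=
        sum_le_sum fun j hj => mul_le_mul_of_nonneg_left (hlow j hj) (ha j)

end

/-- If `(a_n)`, `(b_n)` are nonnegative, `∑ a_n b_n` converges, the partial sums
of `∑ a_n` tend to infinity, and `|b_{n+1} − b_n| ≤ C a_n` for some `C > 0`, then `b_n → 0`. -/
theorem stmt3 (a b : ℕ → ℝ) (ha : ∀ n, 0 ≤ a n) (hb : ∀ n, 0 ≤ b n)
    (hsum : Summable (fun n => a n * b n))
    (hdiv : Filter.Tendsto (fun n => ∑ k ∈ Finset.range n, a k) Filter.atTop Filter.atTop)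
    (C : ℝ) (hC : 0 < C) (hinc : ∀ n, |b (n + 1) - b n| ≤ C * a n) :
    Filter.Tendsto b Filter.atTop (nhds 0) := by
  refine tendsto_order.2 ⟨fun x hx => .of_forall fun n => hx.trans_le (hb n), fun ε hε => ?_⟩
  set η := ε / (2 * C)
  have hCη : C * η = ε / 2 := by simp only [η]; field_simp
  have hblock : 0 < η * (ε / 2) := by positivity
  filter_upwards [hsum.eventually_sum_Ico_mem (Iio_mem_nhds hblock)] with n hn
  by_contra! hεn
  obtain ⟨m, hm⟩ := exists_le_sum_Ico_mul ha hC.le hdiv hinc n (η := η) (by linarith)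
  have : η * (ε / 2) ≤ η * (b n - C * η) := by gcongr; linarith
  exact (hn m).not_ge (this.trans hm)
end

section
/- Let Θ ⊆ ℝ^p be a nonempty closed convex set, let β ∈ (0,1], let α > 0 and α' > 0, let L ≥ 0, and let θ ∈ Θ, z ∈ ℝ^p, g ∈ ℝ^p with ‖g‖ ≤ L. Define θ⁺ = proj_Θ(θ − α z) and z⁺ = β g + ((1−β)/α')(θ − θ⁺). Then ‖z⁺‖² ≤ β L² + (1−β)(α/α')² ‖z‖². -/
/-!
The nearest point `θ⁺` of a convex set to `θ - α z` is at least as close to `θ ∈ Θ` as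
`θ - α z` is (the obtuse-angle criterion for projections), so `‖θ - θ⁺‖ ≤ ‖α z‖`. Since `z⁺` is the
convex combination `β g + (1 - β) (θ - θ⁺) / α'`, convexity of `‖·‖²` finishes the estimate.
-/

open scoped InnerProductSpace

theorem Convex.dist_le_of_forall_dist_le {F : Type*} [NormedAddCommGroup F]
    [InnerProductSpace ℝ F] {K : Set F} (hK : Convex ℝ K) {x p y : F} (hp : p ∈ K)
    (hmin : ∀ w ∈ K, dist x p ≤ dist x w) (hy : y ∈ K) : dist y p ≤ dist y x := by
  have : Nonempty K := ⟨⟨p, hp⟩⟩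
  have hinf : ‖x - p‖ = ⨅ w : K, ‖x - w‖ :=
    le_antisymm (le_ciInf fun w => by simpa only [dist_eq_norm] using hmin w w.2)
      (ciInf_le ⟨0, Set.forall_mem_range.2 fun _ => norm_nonneg _⟩ (⟨p, hp⟩ : K))
  have hobtuse : ⟪x - p, y - p⟫_ℝ ≤ 0 := (norm_eq_iInf_iff_real_inner_le_zero hK hp).1 hinf y hy
  have hsq : dist y p ^ 2 ≤ dist y x ^ 2 := by
    rw [dist_eq_norm, dist_eq_norm, show y - x = (y - p) - (x - p) by abel,
      norm_sub_sq_real (y - p), real_inner_comm]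
    linarith [sq_nonneg ‖x - p‖]
  exact (pow_le_pow_iff_left₀ dist_nonneg dist_nonneg two_ne_zero).1 hsq

theorem norm_smul_add_smul_sq_le {E : Type*} [SeminormedAddCommGroup E] [NormedSpace ℝ E]
    (x y : E) {a b : ℝ} (ha : 0 ≤ a) (hb : 0 ≤ b) (hab : a + b = 1) :
    ‖a • x + b • y‖ ^ 2 ≤ a * ‖x‖ ^ 2 + b * ‖y‖ ^ 2 :=
  (convexOn_univ_norm.pow (fun _ _ => norm_nonneg _) 2).2 (Set.mem_univ x) (Set.mem_univ y)
    ha hb hab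

theorem stmt4_general (p : ℕ) (Θ : Set (EuclideanSpace ℝ (Fin p)))
    (hconv : Convex ℝ Θ)
    (β : ℝ) (hβ : β ∈ Set.Ioc (0 : ℝ) 1) (α α' : ℝ)
    (L : ℝ) (θ z g : EuclideanSpace ℝ (Fin p)) (hθ : θ ∈ Θ) (hg : ‖g‖ ≤ L)
    (θp : EuclideanSpace ℝ (Fin p)) (hθp : θp ∈ Θ)
    (hproj : ∀ y ∈ Θ, dist (θ - α • z) θp ≤ dist (θ - α • z) y) :
    ‖β • g + ((1 - β) / α') • (θ - θp)‖ ^ 2 ≤ β * L ^ 2 + (1 - β) * (α / α') ^ 2 * ‖z‖ ^ 2 := by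
  obtain ⟨hβ0, hβ1⟩ := hβ
  have hstep : ‖θ - θp‖ ≤ ‖α • z‖ := by
    simpa only [dist_eq_norm, sub_sub_cancel] using hconv.dist_le_of_forall_dist_le hθp hproj hθ
  have hscaled : ‖α'⁻¹ • (θ - θp)‖ ^ 2 ≤ (α / α') ^ 2 * ‖z‖ ^ 2 := by
    calc ‖α'⁻¹ • (θ - θp)‖ ^ 2 ≤ ‖α'⁻¹ • α • z‖ ^ 2 := by
          simp only [norm_smul (α'⁻¹)]
          gcongr
      _ = (α / α') ^ 2 * ‖z‖ ^ 2 := by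
          rw [smul_smul, norm_smul, mul_pow, Real.norm_eq_abs, sq_abs, inv_mul_eq_div]
  calc ‖β • g + ((1 - β) / α') • (θ - θp)‖ ^ 2
      = ‖β • g + (1 - β) • α'⁻¹ • (θ - θp)‖ ^ 2 := by rw [smul_smul, div_eq_mul_inv]
    _ ≤ β * ‖g‖ ^ 2 + (1 - β) * ‖α'⁻¹ • (θ - θp)‖ ^ 2 :=
        norm_smul_add_smul_sq_le _ _ hβ0.le (sub_nonneg.2 hβ1) (add_sub_cancel β 1)
    _ ≤ β * L ^ 2 + (1 - β) * (α / α') ^ 2 * ‖z‖ ^ 2 := by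
        rw [mul_assoc (1 - β)]
        gcongr

/-- For a nonempty closed convex `Θ`, `β ∈ (0,1]`, `α, α' > 0`, `‖g‖ ≤ L`,
`θ ∈ Θ`, `θ⁺ = proj_Θ(θ − α z)` and `z⁺ = β g + ((1−β)/α')(θ − θ⁺)`, one has
`‖z⁺‖² ≤ β L² + (1−β)(α/α')² ‖z‖²`. -/
theorem stmt4 (p : ℕ) (Θ : Set (EuclideanSpace ℝ (Fin p))) (hne : Θ.Nonempty)
    (hcl : IsClosed Θ) (hconv : Convex ℝ Θ)
    (β : ℝ) (hβ : β ∈ Set.Ioc (0 : ℝ) 1) (α α' : ℝ) (hα : 0 < α) (hα' : 0 < α')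
    (L : ℝ) (hL : 0 ≤ L) (θ z g : EuclideanSpace ℝ (Fin p)) (hθ : θ ∈ Θ) (hg : ‖g‖ ≤ L)
    (θp : EuclideanSpace ℝ (Fin p)) (hθp : θp ∈ Θ)
    (hproj : ∀ y ∈ Θ, dist (θ - α • z) θp ≤ dist (θ - α • z) y) :
    ‖β • g + ((1 - β) / α') • (θ - θp)‖ ^ 2 ≤ β * L ^ 2 + (1 - β) * (α / α') ^ 2 * ‖z‖ ^ 2 :=
  stmt4_general p Θ hconv β hβ α α' L θ z g hθ hg θp hθp hproj
end

section
/- Let β ∈ (0,1], L ≥ 0, T ≥ 1, let (α_t)_{t≥1} be positive reals, let (g_t)_{t≥1} be vectors in ℝ^p with ‖g_t‖ ≤ L for all t, and let (z_t)_{t≥1} be vectors in ℝ^p satisfying ‖z_{t+1}‖² ≤ β‖g_t‖² + (1−β)(α_t/α_{t+1})² ‖z_t‖² for all t with 1 ≤ t ≤ T. Then ∑_{t=1}^{T} β α_t² ‖z_t‖² ≤ α_1² ‖z_1‖² + β L² ∑_{t=1}^{T} α_{t+1}². -/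
open Finset

/-- Summing `β a_t ≤ a_t - a_{t+1} + b_t` telescopes the `a_t - a_{t+1}`. -/
theorem sum_add_le_of_le_add_one_sub_mul {a b : ℕ → ℝ} {β : ℝ} {T : ℕ}
    (h : ∀ t, 1 ≤ t → t ≤ T → a (t + 1) ≤ b t + (1 - β) * a t) :
    β * ∑ t ∈ Icc 1 T, a t + a (T + 1) ≤ a 1 + ∑ t ∈ Icc 1 T, b t := by
  induction T with
  | zero => simp
  | succ n ih =>
    have ih := ih fun t h1 h2 => h t h1 (by omega)
    have hn := h (n + 1) (by omega) le_rfl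
    rw [sum_Icc_succ_top (by omega), sum_Icc_succ_top (by omega)]
    linarith

theorem sq_mul_sq_norm_succ_le {E : Type*} [NormedAddCommGroup E] {β L : ℝ} (hβ : 0 ≤ β)
    {α₀ α₁ : ℝ} (hα₁ : α₁ ≠ 0) {g z₀ z₁ : E} (hg : ‖g‖ ≤ L)
    (h : ‖z₁‖ ^ 2 ≤ β * ‖g‖ ^ 2 + (1 - β) * (α₀ / α₁) ^ 2 * ‖z₀‖ ^ 2) :
    α₁ ^ 2 * ‖z₁‖ ^ 2 ≤ β * L ^ 2 * α₁ ^ 2 + (1 - β) * (α₀ ^ 2 * ‖z₀‖ ^ 2) := by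
  have hgL : ‖g‖ ^ 2 ≤ L ^ 2 := pow_le_pow_left₀ (norm_nonneg g) hg 2
  calc α₁ ^ 2 * ‖z₁‖ ^ 2
      ≤ α₁ ^ 2 * (β * ‖g‖ ^ 2 + (1 - β) * (α₀ / α₁) ^ 2 * ‖z₀‖ ^ 2) :=
        mul_le_mul_of_nonneg_left h (sq_nonneg α₁)
    _ = β * ‖g‖ ^ 2 * α₁ ^ 2 + (1 - β) * (α₀ ^ 2 * ‖z₀‖ ^ 2) := by field_simp
    _ ≤ β * L ^ 2 * α₁ ^ 2 + (1 - β) * (α₀ ^ 2 * ‖z₀‖ ^ 2) := by gcongr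

theorem stmt5_general (p : ℕ) (β : ℝ) (hβ : β ∈ Set.Ioc (0 : ℝ) 1) (L : ℝ)
    (T : ℕ) (α : ℕ → ℝ) (hα : ∀ t, 0 < α t)
    (g z : ℕ → EuclideanSpace ℝ (Fin p)) (hg : ∀ t, ‖g t‖ ≤ L)
    (hrec : ∀ t, 1 ≤ t → t ≤ T →
      ‖z (t + 1)‖ ^ 2 ≤ β * ‖g t‖ ^ 2 + (1 - β) * (α t / α (t + 1)) ^ 2 * ‖z t‖ ^ 2) :
    ∑ t ∈ Finset.Icc 1 T, β * (α t) ^ 2 * ‖z t‖ ^ 2 ≤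
      (α 1) ^ 2 * ‖z 1‖ ^ 2 + β * L ^ 2 * ∑ t ∈ Finset.Icc 1 T, (α (t + 1)) ^ 2 := by
  have htelescope := sum_add_le_of_le_add_one_sub_mul (a := fun t => α t ^ 2 * ‖z t‖ ^ 2)
    (b := fun t => β * L ^ 2 * α (t + 1) ^ 2) fun t h1 h2 =>
      sq_mul_sq_norm_succ_le hβ.1.le (hα (t + 1)).ne' (hg t) (hrec t h1 h2)
  simp only [mul_sum, mul_assoc] at htelescope ⊢
  have hlast : 0 ≤ α (T + 1) ^ 2 * ‖z (T + 1)‖ ^ 2 := by positivity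
  linarith

/-- If `‖z_{t+1}‖² ≤ β‖g_t‖² + (1−β)(α_t/α_{t+1})²‖z_t‖²` for `1 ≤ t ≤ T`,
with `‖g_t‖ ≤ L` and positive step sizes, then
`∑_{t=1}^T β α_t² ‖z_t‖² ≤ α_1²‖z_1‖² + β L² ∑_{t=1}^T α_{t+1}²`. -/
theorem stmt5 (p : ℕ) (β : ℝ) (hβ : β ∈ Set.Ioc (0 : ℝ) 1) (L : ℝ) (hL : 0 ≤ L)
    (T : ℕ) (hT : 1 ≤ T) (α : ℕ → ℝ) (hα : ∀ t, 0 < α t)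
    (g z : ℕ → EuclideanSpace ℝ (Fin p)) (hg : ∀ t, ‖g t‖ ≤ L)
    (hrec : ∀ t, 1 ≤ t → t ≤ T →
      ‖z (t + 1)‖ ^ 2 ≤ β * ‖g t‖ ^ 2 + (1 - β) * (α t / α (t + 1)) ^ 2 * ‖z t‖ ^ 2) :
    ∑ t ∈ Finset.Icc 1 T, β * (α t) ^ 2 * ‖z t‖ ^ 2 ≤
      (α 1) ^ 2 * ‖z 1‖ ^ 2 + β * L ^ 2 * ∑ t ∈ Finset.Icc 1 T, (α (t + 1)) ^ 2 :=
  stmt5_general p β hβ L T α hα g z hg hrec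
end

section
/- Let Θ ⊆ ℝ^p be a nonempty closed convex set, let f : ℝ^p → ℝ, let ρ̂ > 0, and define the Moreau envelope φ_{1/ρ̂}(x) = inf_{y∈Θ} ( f(y) + (ρ̂/2)‖y − x‖² ). Let θ ∈ ℝ^p and suppose θ̂ ∈ Θ attains the infimum defining φ_{1/ρ̂}(θ), i.e., φ_{1/ρ̂}(θ) = f(θ̂) + (ρ̂/2)‖θ̂ − θ‖². Let g ∈ ℝ^p with ‖g‖ ≤ L, let α ≥ 0, and let θ⁺ = proj_Θ(θ − α g). Then φ_{1/ρ̂}(θ⁺) ≤ φ_{1/ρ̂}(θ) + ρ̂ α ⟨θ̂ − θ, g⟩ + (α² ρ̂ L²)/2. -/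
open scoped InnerProductSpace

/-!
The nearest point `θ⁺` of `Θ` to `u = θ - α g` is at least as close as `u` to every point of
the convex set `Θ`, in particular to `θ̂`. Using `θ̂` as a competitor in the infimum defining
`φ(θ⁺)` and expanding `‖θ̂ - u‖² = ‖θ̂ - θ‖² + 2α⟨θ̂ - θ, g⟩ + α²‖g‖²` gives the bound.
-/

section InnerProductSpace

variable {E : Type*} [NormedAddCommGroup E] [InnerProductSpace ℝ E]

theorem norm_sub_le_norm_sub_of_forall_dist_le {K : Set E} (hK : Convex ℝ K) {u v : E}
    (hv : v ∈ K) (hmin : ∀ y ∈ K, dist u v ≤ dist u y) {y : E} (hy : y ∈ K) :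
    ‖y - v‖ ≤ ‖y - u‖ := by
  have hinf : ‖u - v‖ = ⨅ w : K, ‖u - w‖ := by
    have : Nonempty K := ⟨⟨v, hv⟩⟩
    refine le_antisymm (le_ciInf fun w => by simpa [dist_eq_norm] using hmin w w.2) ?_
    exact ciInf_le ⟨0, fun _ ⟨w, h⟩ => h ▸ norm_nonneg _⟩ (⟨v, hv⟩ : K)
  have hobtuse : ⟪u - v, y - v⟫_ℝ ≤ 0 :=
    (norm_eq_iInf_iff_real_inner_le_zero hK hv).mp hinf y hy
  have hexpand : ‖y - u‖ ^ 2 = ‖y - v‖ ^ 2 - 2 * ⟪u - v, y - v⟫_ℝ + ‖u - v‖ ^ 2 := by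
    rw [show y - u = (y - v) - (u - v) by abel, norm_sub_sq_real, real_inner_comm]
  exact pow_le_pow_iff_left₀ (norm_nonneg _) (norm_nonneg _) two_ne_zero |>.mp
    (by nlinarith [sq_nonneg ‖u - v‖])

theorem norm_sub_sub_smul_sq (y x g : E) (α : ℝ) :
    ‖y - (x - α • g)‖ ^ 2 = ‖y - x‖ ^ 2 + 2 * α * ⟪y - x, g⟫_ℝ + α ^ 2 * ‖g‖ ^ 2 := by
  rw [show y - (x - α • g) = (y - x) + α • g by abel, norm_add_sq_real, real_inner_smul_right,
    norm_smul, Real.norm_eq_abs, mul_pow, sq_abs]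
  ring

end InnerProductSpace

theorem stmt7_general (p : ℕ) (Θ : Set (EuclideanSpace ℝ (Fin p)))
    (hconv : Convex ℝ Θ)
    (f : EuclideanSpace ℝ (Fin p) → ℝ) (ρh : ℝ) (hρh : 0 < ρh)
    (φ : EuclideanSpace ℝ (Fin p) → EReal)
    (hφ : ∀ x, φ x = ⨅ y ∈ Θ, ((f y + (ρh / 2) * ‖y - x‖ ^ 2 : ℝ) : EReal))
    (θ θhat : EuclideanSpace ℝ (Fin p)) (hθhat : θhat ∈ Θ)
    (hatt : φ θ = ((f θhat + (ρh / 2) * ‖θhat - θ‖ ^ 2 : ℝ) : EReal))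
    (g : EuclideanSpace ℝ (Fin p)) (L : ℝ) (hg : ‖g‖ ≤ L) (α : ℝ)
    (θp : EuclideanSpace ℝ (Fin p)) (hθp : θp ∈ Θ)
    (hproj : ∀ y ∈ Θ, dist (θ - α • g) θp ≤ dist (θ - α • g) y) :
    φ θp ≤ φ θ + ((ρh * α * ⟪θhat - θ, g⟫_ℝ + α ^ 2 * ρh * L ^ 2 / 2 : ℝ) : EReal) := by
  have hclose : ‖θhat - θp‖ ^ 2 ≤ ‖θhat - (θ - α • g)‖ ^ 2 := by
    gcongr
    exact norm_sub_le_norm_sub_of_forall_dist_le hconv hθp hproj hθhat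
  have hg2 : ‖g‖ ^ 2 ≤ L ^ 2 := by gcongr
  have hreal : f θhat + ρh / 2 * ‖θhat - θp‖ ^ 2 ≤ f θhat + ρh / 2 * ‖θhat - θ‖ ^ 2 +
      (ρh * α * ⟪θhat - θ, g⟫_ℝ + α ^ 2 * ρh * L ^ 2 / 2) := by
    rw [norm_sub_sub_smul_sq] at hclose
    nlinarith [mul_le_mul_of_nonneg_left hg2 (sq_nonneg α)]
  calc φ θp ≤ ((f θhat + ρh / 2 * ‖θhat - θp‖ ^ 2 : ℝ) : EReal) := by
        rw [hφ θp]
        exact iInf₂_le θhat hθhat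
    _ ≤ ((f θhat + ρh / 2 * ‖θhat - θ‖ ^ 2 +
          (ρh * α * ⟪θhat - θ, g⟫_ℝ + α ^ 2 * ρh * L ^ 2 / 2) : ℝ) : EReal) := by
        exact_mod_cast hreal
    _ = _ := by rw [hatt, ← EReal.coe_add]

/-- For the Moreau envelope `φ(x) = inf_{y∈Θ}(f y + (ρ̂/2)‖y − x‖²)` (valued in
`EReal` so that the infimum is always defined), if `θ̂ ∈ Θ` attains the infimum defining `φ(θ)`,
`‖g‖ ≤ L`, `α ≥ 0` and `θ⁺ = proj_Θ(θ − α g)`, then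
`φ(θ⁺) ≤ φ(θ) + ρ̂ α ⟨θ̂ − θ, g⟩ + α²ρ̂L²/2`. -/
theorem stmt7 (p : ℕ) (Θ : Set (EuclideanSpace ℝ (Fin p))) (hne : Θ.Nonempty)
    (hcl : IsClosed Θ) (hconv : Convex ℝ Θ)
    (f : EuclideanSpace ℝ (Fin p) → ℝ) (ρh : ℝ) (hρh : 0 < ρh)
    (φ : EuclideanSpace ℝ (Fin p) → EReal)
    (hφ : ∀ x, φ x = ⨅ y ∈ Θ, ((f y + (ρh / 2) * ‖y - x‖ ^ 2 : ℝ) : EReal))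
    (θ θhat : EuclideanSpace ℝ (Fin p)) (hθhat : θhat ∈ Θ)
    (hatt : φ θ = ((f θhat + (ρh / 2) * ‖θhat - θ‖ ^ 2 : ℝ) : EReal))
    (g : EuclideanSpace ℝ (Fin p)) (L : ℝ) (hg : ‖g‖ ≤ L) (α : ℝ) (hα : 0 ≤ α)
    (θp : EuclideanSpace ℝ (Fin p)) (hθp : θp ∈ Θ)
    (hproj : ∀ y ∈ Θ, dist (θ - α • g) θp ≤ dist (θ - α • g) y) :
    φ θp ≤ φ θ + ((ρh * α * ⟪θhat - θ, g⟫_ℝ + α ^ 2 * ρh * L ^ 2 / 2 : ℝ) : EReal) :=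
  stmt7_general p Θ hconv f ρh hρh φ hφ θ θhat hθhat hatt g L hg α θp hθp hproj
end

section
/- Let Θ ⊆ ℝ^p be a convex set, let f : ℝ^p → ℝ be ρ-weakly convex, and let ρ̂ > ρ > 0. Let θ₁, θ₂ ∈ ℝ^p and suppose θ̂₁, θ̂₂ ∈ Θ are minimizers over Θ of θ' ↦ f(θ') + (ρ̂/2)‖θ' − θ₁‖² and θ' ↦ f(θ') + (ρ̂/2)‖θ' − θ₂‖², respectively. Then ‖(θ₁ − θ̂₁) − (θ₂ − θ̂₂)‖ ≤ ((2ρ̂ − ρ)/(ρ̂ − ρ)) ‖θ₁ − θ₂‖. -/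
/-!
Adding `(ρ̂/2)‖· - c‖²` to a `ρ`-weakly convex `f` gives a `(ρ̂ - ρ)`-strongly convex function,
so its minimizer over a convex set has quadratic growth. Evaluating each of the two proximal
problems at the other's minimizer and adding gives `(ρ̂ - ρ)‖θ̂₁ - θ̂₂‖² ≤ ρ̂⟪θ₁ - θ₂, θ̂₁ - θ̂₂⟫`,
so the proximal map is `ρ̂/(ρ̂ - ρ)`-Lipschitz, and the triangle inequality gives the constant
`1 + ρ̂/(ρ̂ - ρ)`.
-/

open Filter Topology RealInnerProductSpace

variable {E : Type*} [NormedAddCommGroup E] [InnerProductSpace ℝ E]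

theorem ConvexOn.strongConvexOn_add_sq_norm_sub {s : Set E} {f : E → ℝ} {ρ : ℝ}
    (hf : ConvexOn ℝ s fun x => f x + ρ / 2 * ‖x‖ ^ 2) (ρh : ℝ) (c : E) :
    StrongConvexOn s (ρh - ρ) fun x => f x + ρh / 2 * ‖x - c‖ ^ 2 := by
  rw [strongConvexOn_iff_convex]
  have hlin : ConvexOn ℝ s fun x => ⟪-(ρh • c), x⟫ := (innerₛₗ ℝ (-(ρh • c))).convexOn hf.1
  refine ((hf.add hlin).add_const (ρh / 2 * ‖c‖ ^ 2)).congr fun x _ => ?_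
  simp only [Pi.add_apply]
  rw [norm_sub_sq_real, inner_neg_left, real_inner_smul_left, real_inner_comm]
  ring

theorem StrongConvexOn.add_sq_norm_sub_le_of_isMinOn {s : Set E} {m : ℝ} {f : E → ℝ} {a y : E}
    (hf : StrongConvexOn s m f) (hmin : IsMinOn f s a) (ha : a ∈ s) (hy : y ∈ s) :
    f a + m / 2 * ‖y - a‖ ^ 2 ≤ f y := by
  have hsegment : ∀ t ∈ Set.Ioo (0 : ℝ) 1, f a + (1 - t) * (m / 2 * ‖y - a‖ ^ 2) ≤ f y := by
    rintro t ⟨ht0, ht1⟩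
    have hconv := hf.2 ha hy (sub_nonneg.2 ht1.le) ht0.le (sub_add_cancel 1 t)
    have hle : f a ≤ f ((1 - t) • a + t • y) :=
      hmin (hf.1 ha hy (sub_nonneg.2 ht1.le) ht0.le (sub_add_cancel 1 t))
    rw [norm_sub_rev] at hconv
    simp only [smul_eq_mul] at hconv
    have hscaled : t * (f a + (1 - t) * (m / 2 * ‖y - a‖ ^ 2)) ≤ t * f y := by nlinarith
    exact le_of_mul_le_mul_left hscaled ht0
  have hlim : Tendsto (fun t : ℝ => f a + (1 - t) * (m / 2 * ‖y - a‖ ^ 2)) (𝓝[>] 0)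
      (𝓝 (f a + m / 2 * ‖y - a‖ ^ 2)) := by
    have hcont : Continuous fun t : ℝ => f a + (1 - t) * (m / 2 * ‖y - a‖ ^ 2) := by fun_prop
    simpa using (hcont.tendsto 0).mono_left nhdsWithin_le_nhds
  exact le_of_tendsto hlim (eventually_of_mem (Ioo_mem_nhdsGT one_pos) hsegment)

section Prox

variable {s : Set E} {f : E → ℝ} {ρ ρh : ℝ} {c₁ c₂ a₁ a₂ : E}

theorem mul_norm_sub_sq_le_inner_of_isMinOn_prox
    (hf : ConvexOn ℝ s fun x => f x + ρ / 2 * ‖x‖ ^ 2)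
    (hmin₁ : IsMinOn (fun x => f x + ρh / 2 * ‖x - c₁‖ ^ 2) s a₁)
    (hmin₂ : IsMinOn (fun x => f x + ρh / 2 * ‖x - c₂‖ ^ 2) s a₂) (ha₁ : a₁ ∈ s) (ha₂ : a₂ ∈ s) :
    (ρh - ρ) * ‖a₁ - a₂‖ ^ 2 ≤ ρh * ⟪c₁ - c₂, a₁ - a₂⟫ := by
  have h₁ := (hf.strongConvexOn_add_sq_norm_sub ρh c₁).add_sq_norm_sub_le_of_isMinOn hmin₁ ha₁ ha₂
  have h₂ := (hf.strongConvexOn_add_sq_norm_sub ρh c₂).add_sq_norm_sub_le_of_isMinOn hmin₂ ha₂ ha₁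
  have hpolar : ‖a₂ - c₁‖ ^ 2 - ‖a₁ - c₁‖ ^ 2 + ‖a₁ - c₂‖ ^ 2 - ‖a₂ - c₂‖ ^ 2
      = 2 * ⟪c₁ - c₂, a₁ - a₂⟫ := by
    simp only [norm_sub_sq_real, inner_sub_right, real_inner_comm a₁, real_inner_comm a₂]
    ring
  rw [norm_sub_rev a₂] at h₁
  linear_combination h₁ + h₂ + ρh / 2 * hpolar

theorem norm_sub_le_of_isMinOn_prox (hρh : 0 ≤ ρh) (hρ : ρ < ρh)
    (hf : ConvexOn ℝ s fun x => f x + ρ / 2 * ‖x‖ ^ 2)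
    (hmin₁ : IsMinOn (fun x => f x + ρh / 2 * ‖x - c₁‖ ^ 2) s a₁)
    (hmin₂ : IsMinOn (fun x => f x + ρh / 2 * ‖x - c₂‖ ^ 2) s a₂) (ha₁ : a₁ ∈ s) (ha₂ : a₂ ∈ s) :
    ‖a₁ - a₂‖ ≤ ρh / (ρh - ρ) * ‖c₁ - c₂‖ := by
  have hkey := mul_norm_sub_sq_le_inner_of_isMinOn_prox hf hmin₁ hmin₂ ha₁ ha₂
  have hcs := mul_le_mul_of_nonneg_left (real_inner_le_norm (c₁ - c₂) (a₁ - a₂)) hρh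
  rw [div_mul_eq_mul_div, le_div_iff₀ (sub_pos.2 hρ)]
  rcases (norm_nonneg (a₁ - a₂)).eq_or_lt with h | h
  · rw [← h, zero_mul]
    exact mul_nonneg hρh (norm_nonneg _)
  · exact le_of_mul_le_mul_right (by nlinarith) h

end Prox

/-- If `f` is `ρ`-weakly convex, `ρ̂ > ρ > 0`, and `θ̂₁, θ̂₂ ∈ Θ` (convex)
are proximal points of `θ₁, θ₂` with parameter `ρ̂`, then
`‖(θ₁ − θ̂₁) − (θ₂ − θ̂₂)‖ ≤ ((2ρ̂ − ρ)/(ρ̂ − ρ))‖θ₁ − θ₂‖`. -/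
theorem stmt9 (p : ℕ) (Θ : Set (EuclideanSpace ℝ (Fin p))) (hΘ : Convex ℝ Θ)
    (f : EuclideanSpace ℝ (Fin p) → ℝ) (ρ ρh : ℝ) (hρ : 0 < ρ) (hρh : ρ < ρh)
    (hwc : ConvexOn ℝ Set.univ (fun x => f x + (ρ / 2) * ‖x‖ ^ 2))
    (θ₁ θ₂ : EuclideanSpace ℝ (Fin p))
    (θhat₁ θhat₂ : EuclideanSpace ℝ (Fin p)) (hmem₁ : θhat₁ ∈ Θ) (hmem₂ : θhat₂ ∈ Θ)
    (hmin₁ : ∀ θ' ∈ Θ,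
      f θhat₁ + (ρh / 2) * ‖θhat₁ - θ₁‖ ^ 2 ≤ f θ' + (ρh / 2) * ‖θ' - θ₁‖ ^ 2)
    (hmin₂ : ∀ θ' ∈ Θ,
      f θhat₂ + (ρh / 2) * ‖θhat₂ - θ₂‖ ^ 2 ≤ f θ' + (ρh / 2) * ‖θ' - θ₂‖ ^ 2) :
    ‖(θ₁ - θhat₁) - (θ₂ - θhat₂)‖ ≤ ((2 * ρh - ρ) / (ρh - ρ)) * ‖θ₁ - θ₂‖ := by
  have hprox : ‖θhat₁ - θhat₂‖ ≤ ρh / (ρh - ρ) * ‖θ₁ - θ₂‖ :=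
    norm_sub_le_of_isMinOn_prox (hρ.trans hρh).le hρh (hwc.subset (Set.subset_univ Θ) hΘ)
      (isMinOn_iff.2 hmin₁) (isMinOn_iff.2 hmin₂) hmem₁ hmem₂
  calc ‖(θ₁ - θhat₁) - (θ₂ - θhat₂)‖ = ‖(θ₁ - θ₂) - (θhat₁ - θhat₂)‖ := by
        rw [sub_sub_sub_comm]
    _ ≤ ‖θ₁ - θ₂‖ + ‖θhat₁ - θhat₂‖ := norm_sub_le _ _
    _ ≤ ‖θ₁ - θ₂‖ + ρh / (ρh - ρ) * ‖θ₁ - θ₂‖ := by gcongr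
    _ = (2 * ρh - ρ) / (ρh - ρ) * ‖θ₁ - θ₂‖ := by
        field_simp [(sub_pos.2 hρh).ne']
        ring
end

section
/- Let Θ ⊆ ℝ^p be a nonempty closed convex set, let β ∈ (0,1], α > 0, and let θ_prev, θ, θ̂ ∈ Θ and g ∈ ℝ^p. Define z = β g + ((1−β)/α)(θ_prev − θ), θ⁺ = proj_Θ(θ − α z), θ̄ = θ + ((1−β)/β)(θ − θ_prev), and θ̄⁺ = θ⁺ + ((1−β)/β)(θ⁺ − θ). Then ‖θ̄⁺ − θ̂‖ ≤ ‖θ̄ − θ̂ − α g‖. -/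
open RealInnerProductSpace

/-
With `w = β θ̂ + (1 − β) θ ∈ Θ`, both sides of the inequality are `1/β` times a distance to `w`:
`θ̄⁺ − θ̂ = (θ⁺ − w) / β` and `θ̄ − θ̂ − α g = (θ − α z − w) / β`. Since `θ⁺` is the nearest point
of `Θ` to `θ − α z`, it is at least as close to every point of the convex set `Θ` as
`θ − α z` is.
-/

section NearestPoint

variable {F : Type*} [NormedAddCommGroup F] [InnerProductSpace ℝ F]

theorem real_inner_le_zero_of_forall_dist_le {K : Set F} (hK : Convex ℝ K) {u v : F}
    (hv : v ∈ K) (hmin : ∀ w ∈ K, dist u v ≤ dist u w) : ∀ w ∈ K, ⟪u - v, w - v⟫ ≤ 0 := by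
  have : Nonempty K := ⟨⟨v, hv⟩⟩
  refine (norm_eq_iInf_iff_real_inner_le_zero hK hv).mp (le_antisymm ?_ ?_)
  · exact le_ciInf fun w => by simpa only [dist_eq_norm] using hmin w w.2
  · exact ciInf_le ⟨0, by rintro _ ⟨w, rfl⟩; exact norm_nonneg _⟩ (⟨v, hv⟩ : K)

theorem norm_sub_le_of_forall_dist_le {K : Set F} (hK : Convex ℝ K) {u v : F}
    (hv : v ∈ K) (hmin : ∀ w ∈ K, dist u v ≤ dist u w) {w : F} (hw : w ∈ K) :
    ‖v - w‖ ≤ ‖u - w‖ := by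
  have hinner : 0 ≤ ⟪u - v, v - w⟫ := by
    have := real_inner_le_zero_of_forall_dist_le hK hv hmin w hw
    rwa [← neg_sub v w, inner_neg_right, neg_nonpos] at this
  have hsq : ‖u - w‖ ^ 2 = ‖u - v‖ ^ 2 + 2 * ⟪u - v, v - w⟫ + ‖v - w‖ ^ 2 := by
    rw [← norm_add_sq_real, sub_add_sub_cancel]
  refine le_of_sq_le_sq ?_ (norm_nonneg _)
  linarith [sq_nonneg ‖u - v‖]

end NearestPoint

theorem stmt10_general (p : ℕ) (Θ : Set (EuclideanSpace ℝ (Fin p)))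
    (hconv : Convex ℝ Θ)
    (β : ℝ) (hβ : β ∈ Set.Ioc (0 : ℝ) 1) (α : ℝ) (hα : 0 < α)
    (θprev θ θhat : EuclideanSpace ℝ (Fin p))
    (hθ : θ ∈ Θ) (hθhat : θhat ∈ Θ)
    (g z : EuclideanSpace ℝ (Fin p))
    (hz : z = β • g + ((1 - β) / α) • (θprev - θ))
    (θp : EuclideanSpace ℝ (Fin p)) (hθp : θp ∈ Θ)
    (hproj : ∀ y ∈ Θ, dist (θ - α • z) θp ≤ dist (θ - α • z) y)
    (θbar θbarp : EuclideanSpace ℝ (Fin p))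
    (hθbar : θbar = θ + ((1 - β) / β) • (θ - θprev))
    (hθbarp : θbarp = θp + ((1 - β) / β) • (θp - θ)) :
    ‖θbarp - θhat‖ ≤ ‖θbar - θhat - α • g‖ := by
  obtain ⟨hβ0, hβ1⟩ := hβ
  set w := β • θhat + (1 - β) • θ
  have hw : w ∈ Θ := hconv hθhat hθ hβ0.le (sub_nonneg.2 hβ1) (add_sub_cancel _ _)
  have hθp_sub : θp - w = β • (θbarp - θhat) := by
    rw [hθbarp]
    match_scalars <;> field_simp; ring
  have hstep_sub : θ - α • z - w = β • (θbar - θhat - α • g) := by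
    rw [hθbar, hz]
    match_scalars <;> field_simp; ring
  have key := norm_sub_le_of_forall_dist_le hconv hθp hproj hw
  rw [hθp_sub, hstep_sub, norm_smul, norm_smul, Real.norm_of_nonneg hβ0.le] at key
  exact le_of_mul_le_mul_left key hβ0

/-- With `z = β g + ((1−β)/α)(θ_prev − θ)`, `θ⁺ = proj_Θ(θ − α z)`,
`θ̄ = θ + ((1−β)/β)(θ − θ_prev)` and `θ̄⁺ = θ⁺ + ((1−β)/β)(θ⁺ − θ)`, one has
`‖θ̄⁺ − θ̂‖ ≤ ‖θ̄ − θ̂ − α g‖` for any `θ_prev, θ, θ̂ ∈ Θ` (nonempty closed convex). -/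
theorem stmt10 (p : ℕ) (Θ : Set (EuclideanSpace ℝ (Fin p))) (hne : Θ.Nonempty)
    (hcl : IsClosed Θ) (hconv : Convex ℝ Θ)
    (β : ℝ) (hβ : β ∈ Set.Ioc (0 : ℝ) 1) (α : ℝ) (hα : 0 < α)
    (θprev θ θhat : EuclideanSpace ℝ (Fin p))
    (hθprev : θprev ∈ Θ) (hθ : θ ∈ Θ) (hθhat : θhat ∈ Θ)
    (g z : EuclideanSpace ℝ (Fin p))
    (hz : z = β • g + ((1 - β) / α) • (θprev - θ))
    (θp : EuclideanSpace ℝ (Fin p)) (hθp : θp ∈ Θ)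
    (hproj : ∀ y ∈ Θ, dist (θ - α • z) θp ≤ dist (θ - α • z) y)
    (θbar θbarp : EuclideanSpace ℝ (Fin p))
    (hθbar : θbar = θ + ((1 - β) / β) • (θ - θprev))
    (hθbarp : θbarp = θp + ((1 - β) / β) • (θp - θ)) :
    ‖θbarp - θhat‖ ≤ ‖θbar - θhat - α • g‖ :=
  stmt10_general p Θ hconv β hβ α hα θprev θ θhat hθ hθhat g z hz θp hθp hproj θbar θbarp hθbar
    hθbarp
end

section
/- Let a_1, …, a_n be nonnegative real numbers and let v_0 > 0. Then ∑_{i=1}^{n} a_i / (v_0 + ∑_{j=1}^{i} a_j) ≤ log( 1 + (∑_{i=1}^{n} a_i)/v_0 ). -/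
/-!
Since `1 - 1/x ≤ log x`, we have `a / (s + a) ≤ log (s + a) - log s` for `0 ≤ a` and `0 < s`. Applied with
`s = v₀ + ∑_{j<i} a_j` and `a = a_i`, each summand is bounded by the increment of `log` between
consecutive partial sums, and these increments telescope to `log ((v₀ + ∑ a_i) / v₀)`.
-/

open Finset Real

lemma div_add_le_log_add_sub_log {a s : ℝ} (ha : 0 ≤ a) (hs : 0 < s) :
    a / (s + a) ≤ log (s + a) - log s := by
  have hsa : 0 < s + a := by linarith
  have h := one_sub_inv_le_log_of_pos (div_pos hsa hs)
  rw [log_div hsa.ne' hs.ne', inv_div] at h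
  have h1 : 1 - s / (s + a) = a / (s + a) := by field_simp; ring
  linarith

lemma sum_div_partialSum_le_log_sub_log (a : ℕ → ℝ) {v0 : ℝ} (hv0 : 0 < v0) :
    ∀ n : ℕ, (∀ i, 1 ≤ i → i ≤ n → 0 ≤ a i) →
      ∑ i ∈ Icc 1 n, a i / (v0 + ∑ j ∈ Icc 1 i, a j) ≤
        log (v0 + ∑ i ∈ Icc 1 n, a i) - log v0
  | 0, _ => by simp
  | n + 1, ha => by
    have ha' : ∀ i, 1 ≤ i → i ≤ n → 0 ≤ a i := fun i h1 h2 => ha i h1 (h2.trans n.le_succ)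
    have hsum : 0 ≤ ∑ j ∈ Icc 1 n, a j :=
      sum_nonneg fun i hi => ha' i (mem_Icc.1 hi).1 (mem_Icc.1 hi).2
    have hstep := div_add_le_log_add_sub_log (ha (n + 1) (Nat.le_add_left 1 n) le_rfl)
      (add_pos_of_pos_of_nonneg hv0 hsum)
    rw [sum_Icc_succ_top (Nat.le_add_left 1 n), sum_Icc_succ_top (Nat.le_add_left 1 n), ← add_assoc]
    linarith [sum_div_partialSum_le_log_sub_log a hv0 n ha']

/-- For nonnegative `a_1, …, a_n` and `v₀ > 0`,
`∑_{i=1}^n a_i/(v₀ + ∑_{j=1}^i a_j) ≤ log(1 + (∑_{i=1}^n a_i)/v₀)`. -/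
theorem stmt16 (n : ℕ) (a : ℕ → ℝ) (ha : ∀ i, 1 ≤ i → i ≤ n → 0 ≤ a i)
    (v0 : ℝ) (hv0 : 0 < v0) :
    ∑ i ∈ Finset.Icc 1 n, a i / (v0 + ∑ j ∈ Finset.Icc 1 i, a j) ≤
      Real.log (1 + (∑ i ∈ Finset.Icc 1 n, a i) / v0) := by
  have hsum : 0 ≤ ∑ i ∈ Icc 1 n, a i :=
    sum_nonneg fun i hi => ha i (mem_Icc.1 hi).1 (mem_Icc.1 hi).2
  rw [one_add_div hv0.ne', log_div (by positivity) hv0.ne']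
  exact sum_div_partialSum_le_log_sub_log a hv0 n ha
end

section
/- Let a_1, …, a_n be nonnegative real numbers. Then ∑_{i=1}^{n} a_i / √(∑_{j=1}^{i} a_j) ≤ 2 √(∑_{i=1}^{n} a_i), where any term with zero denominator is interpreted as 0. -/
/-! Each term is dominated by a telescoping difference: with `S = s + x`,
`x / √S = (√S - √s)(√S + √s) / √S ≤ 2 (√S - √s)`, and summing over the partial sums gives
`2 √(∑ aᵢ)`. -/

open Finset Real

theorem div_sqrt_add_le_two_mul_sqrt_sub {s x : ℝ} (hs : 0 ≤ s) (hx : 0 ≤ x) :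
    x / √(s + x) ≤ 2 * (√(s + x) - √s) := by
  rcases (add_nonneg hs hx).eq_or_lt with hzero | hpos
  · obtain rfl : s = 0 := by linarith
    obtain rfl : x = 0 := by linarith
    simp
  have hroot : 0 < √(s + x) := sqrt_pos.mpr hpos
  have hmono : √s ≤ √(s + x) := sqrt_le_sqrt (by linarith)
  have hdiff : x = (√(s + x) - √s) * (√(s + x) + √s) := by
    linear_combination -sq_sqrt (add_nonneg hs hx) + sq_sqrt hs
  rw [div_le_iff₀ hroot]
  calc x = (√(s + x) - √s) * (√(s + x) + √s) := hdiff
    _ ≤ (√(s + x) - √s) * (2 * √(s + x)) := by gcongr; linarith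
    _ = 2 * (√(s + x) - √s) * √(s + x) := by ring

/-- For nonnegative `a_1, …, a_n`,
`∑_{i=1}^n a_i/√(∑_{j=1}^i a_j) ≤ 2√(∑_{i=1}^n a_i)` (terms with zero denominator are `0`,
which is Lean's convention for division by zero). -/
theorem stmt17 (n : ℕ) (a : ℕ → ℝ) (ha : ∀ i, 1 ≤ i → i ≤ n → 0 ≤ a i) :
    ∑ i ∈ Finset.Icc 1 n, a i / Real.sqrt (∑ j ∈ Finset.Icc 1 i, a j) ≤
      2 * Real.sqrt (∑ i ∈ Finset.Icc 1 n, a i) := by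
  induction n with
  | zero => simp
  | succ n ih =>
    have ha' : ∀ i, 1 ≤ i → i ≤ n → 0 ≤ a i := fun i h1 h2 => ha i h1 (by omega)
    have hS : 0 ≤ ∑ j ∈ Icc 1 n, a j :=
      sum_nonneg fun i hi => ha' i (mem_Icc.mp hi).1 (mem_Icc.mp hi).2
    have hlast := div_sqrt_add_le_two_mul_sqrt_sub hS (ha (n + 1) (by omega) le_rfl)
    rw [sum_Icc_succ_top (by omega), sum_Icc_succ_top (by omega)]
    linarith [ih ha']
end

section
/- Let T ≥ 1 and k ≥ 1 be integers, let a_1, …, a_T be nonnegative real numbers, and let v_0 > 0, α > 0. For 1 ≤ s ≤ T define c_s = α·a_s / √(v_0 + ∑_{j=1}^{s} a_j²), and set c_s = 0 for s ≤ 0. Then ∑_{t=1}^{T} (√t/(2k)) ( ∑_{s=t−k}^{t−1} c_s )² ≤ (√T · k · α² / 2) · log( 1 + v_0^{-1} ∑_{t=1}^{T} a_t² ). -/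
/-!
Each window sum `∑_{s=t-k}^{t-1} c_s` has at most `k` terms, so by Cauchy–Schwarz its square
is at most `k ∑ c_s²` over the window, and every index `s` lies in at most `k` windows. Bounding
`√t ≤ √T` leaves `(√T k / 2) ∑_s c_s²`. Finally `c_s² = α² a_s² / V_s` with
`V_s = v₀ + ∑_{j ≤ s} a_j²`, and `(V_s - V_{s-1}) / V_s ≤ log V_s - log V_{s-1}` telescopes to
`log (V_T / v₀)`.
-/

open Finset

lemma div_add_le_log_add_sub_log_s18 {S x : ℝ} (hS : 0 < S) (hx : 0 ≤ x) :
    x / (S + x) ≤ Real.log (S + x) - Real.log S := by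
  have hSx : 0 < S + x := by linarith
  have h := Real.one_sub_inv_le_log_of_pos (div_pos hSx hS)
  rwa [Real.log_div hSx.ne' hS.ne', inv_div, one_sub_div hSx.ne', add_sub_cancel_left] at h

lemma sum_div_cumsum_le_log {v : ℝ} (hv : 0 < v) {b : ℕ → ℝ} (hb : ∀ j, 0 ≤ b j) (n : ℕ) :
    ∑ s ∈ Icc 1 n, b s / (v + ∑ j ∈ Icc 1 s, b j) ≤
      Real.log (v + ∑ j ∈ Icc 1 n, b j) - Real.log v := by
  induction n with
  | zero => simp
  | succ n ih =>
    have hV : 0 < v + ∑ j ∈ Icc 1 n, b j := add_pos_of_pos_of_nonneg hv (sum_nonneg fun j _ ↦ hb j)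
    have step := div_add_le_log_add_sub_log_s18 hV (hb (n + 1))
    rw [sum_Icc_succ_top (by omega), sum_Icc_succ_top (by omega), ← add_assoc]
    linarith

lemma sum_div_cumsum_le_log_one_add {v : ℝ} (hv : 0 < v) {b : ℕ → ℝ} (hb : ∀ j, 0 ≤ b j)
    (n : ℕ) :
    ∑ s ∈ Icc 1 n, b s / (v + ∑ j ∈ Icc 1 s, b j) ≤
      Real.log (1 + v⁻¹ * ∑ j ∈ Icc 1 n, b j) := by
  have hV : 0 < v + ∑ j ∈ Icc 1 n, b j := add_pos_of_pos_of_nonneg hv (sum_nonneg fun j _ ↦ hb j)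
  have h : 1 + v⁻¹ * ∑ j ∈ Icc 1 n, b j = (v + ∑ j ∈ Icc 1 n, b j) / v := by
    field_simp
  rw [h, Real.log_div hV.ne' hv.ne']
  exact sum_div_cumsum_le_log hv hb n

lemma sum_sq_div_sqrt_cumsum_le_log {v : ℝ} (hv : 0 < v) (α : ℝ) (a : ℕ → ℝ) (n : ℕ) :
    ∑ s ∈ Icc 1 n, (α * a s / Real.sqrt (v + ∑ j ∈ Icc 1 s, a j ^ 2)) ^ 2 ≤
      α ^ 2 * Real.log (1 + v⁻¹ * ∑ j ∈ Icc 1 n, a j ^ 2) := by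
  have hsq : ∀ s, (α * a s / Real.sqrt (v + ∑ j ∈ Icc 1 s, a j ^ 2)) ^ 2 =
      α ^ 2 * (a s ^ 2 / (v + ∑ j ∈ Icc 1 s, a j ^ 2)) := fun s ↦ by
    rw [div_pow, mul_pow, mul_div_assoc,
      Real.sq_sqrt (add_pos_of_pos_of_nonneg hv (sum_nonneg fun j _ ↦ sq_nonneg (a j))).le]
  simp only [hsq, ← mul_sum]
  exact mul_le_mul_of_nonneg_left
    (sum_div_cumsum_le_log_one_add hv (fun j ↦ sq_nonneg (a j)) n) (sq_nonneg α)

lemma sq_sum_div_le_sum_sq_of_card_le {ι : Type*} {s : Finset ι} {k : ℕ} (hs : #s ≤ k)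
    (f : ι → ℝ) : (∑ i ∈ s, f i) ^ 2 / k ≤ ∑ i ∈ s, f i ^ 2 := by
  have hsq : 0 ≤ ∑ i ∈ s, f i ^ 2 := sum_nonneg fun i _ ↦ sq_nonneg (f i)
  refine div_le_of_le_mul₀ k.cast_nonneg hsq ?_
  calc (∑ i ∈ s, f i) ^ 2 ≤ #s * ∑ i ∈ s, f i ^ 2 := sq_sum_le_card_mul_sum_sq
    _ ≤ (∑ i ∈ s, f i ^ 2) * k := by
      rw [mul_comm]
      exact mul_le_mul_of_nonneg_left (by exact_mod_cast hs) hsq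

lemma card_Icc_sub_le {t : ℕ} (ht : 1 ≤ t) (k : ℕ) : #(Icc (t - k) (t - 1)) ≤ k := by
  simp only [Nat.card_Icc]
  omega

/-- Each `s` lies in the windows `Icc (t - k) (t - 1)` of at most `k` values of `t`,
namely `t ∈ Icc (s + 1) (s + k)`. -/
lemma sum_sum_Icc_window_le {g : ℕ → ℝ} (hg : ∀ s, 0 ≤ g s) (T k : ℕ) :
    ∑ t ∈ Icc 1 T, ∑ s ∈ Icc (t - k) (t - 1), g s ≤ k * ∑ s ∈ range T, g s := by
  rw [sum_comm' (t' := range T) (s' := fun s ↦ (Icc 1 T).filter (fun t ↦ s ∈ Icc (t - k) (t - 1)))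
    (fun t s ↦ by simp only [mem_Icc, mem_filter, mem_range]; omega), mul_sum]
  refine sum_le_sum fun s _ ↦ ?_
  have hwindows : ((Icc 1 T).filter (fun t ↦ s ∈ Icc (t - k) (t - 1))) ⊆ Icc (s + 1) (s + k) := by
    intro t
    simp only [mem_filter, mem_Icc]
    omega
  rw [sum_const, nsmul_eq_mul]
  refine mul_le_mul_of_nonneg_right ?_ (hg s)
  exact_mod_cast (card_le_card hwindows).trans (by simp)

lemma sqrt_div_mul_sq_sum_window_le {t T : ℕ} (ht : t ∈ Icc 1 T) (k : ℕ) (c : ℕ → ℝ) :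
    Real.sqrt t / (2 * k) * (∑ s ∈ Icc (t - k) (t - 1), c s) ^ 2 ≤
      Real.sqrt T / 2 * ∑ s ∈ Icc (t - k) (t - 1), c s ^ 2 := by
  obtain ⟨ht1, htT⟩ := mem_Icc.1 ht
  rw [show Real.sqrt t / (2 * k) * (∑ s ∈ Icc (t - k) (t - 1), c s) ^ 2 =
    Real.sqrt t / 2 * ((∑ s ∈ Icc (t - k) (t - 1), c s) ^ 2 / k) by ring]
  have hsqrt : Real.sqrt t ≤ Real.sqrt T := Real.sqrt_le_sqrt (by exact_mod_cast htT)
  gcongr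
  exact sq_sum_div_le_sum_sq_of_card_le (card_Icc_sub_le ht1 k) c

theorem stmt18_general (T k : ℕ)
    (a : ℕ → ℝ)
    (v0 α : ℝ) (hv0 : 0 < v0)
    (c : ℕ → ℝ) (hc0 : c 0 = 0)
    (hc : ∀ s, 1 ≤ s →
      c s = α * a s / Real.sqrt (v0 + ∑ j ∈ Finset.Icc 1 s, (a j) ^ 2)) :
    ∑ t ∈ Finset.Icc 1 T, (Real.sqrt t / (2 * k)) * (∑ s ∈ Finset.Icc (t - k) (t - 1), c s) ^ 2 ≤
      (Real.sqrt T * k * α ^ 2 / 2) *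
        Real.log (1 + v0⁻¹ * ∑ t ∈ Finset.Icc 1 T, (a t) ^ 2) := by
  have hc_sq : ∑ s ∈ range T, c s ^ 2 ≤ α ^ 2 * Real.log (1 + v0⁻¹ * ∑ t ∈ Icc 1 T, a t ^ 2) := by
    have hsub : range T ⊆ insert 0 (Icc 1 T) := fun s ↦ by
      simp only [mem_range, mem_insert, mem_Icc]
      omega
    calc ∑ s ∈ range T, c s ^ 2 ≤ ∑ s ∈ insert 0 (Icc 1 T), c s ^ 2 :=
          sum_le_sum_of_subset_of_nonneg hsub fun s _ _ ↦ sq_nonneg (c s)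
      _ = ∑ s ∈ Icc 1 T, (α * a s / Real.sqrt (v0 + ∑ j ∈ Icc 1 s, a j ^ 2)) ^ 2 := by
          rw [sum_insert (by simp), hc0, zero_pow two_ne_zero, zero_add]
          exact sum_congr rfl fun s hs ↦ by rw [hc s (mem_Icc.1 hs).1]
      _ ≤ _ := sum_sq_div_sqrt_cumsum_le_log hv0 α a T
  calc _ ≤ ∑ t ∈ Icc 1 T, Real.sqrt T / 2 * ∑ s ∈ Icc (t - k) (t - 1), c s ^ 2 :=
        sum_le_sum fun t ht ↦ sqrt_div_mul_sq_sum_window_le ht k c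
    _ ≤ Real.sqrt T / 2 * (k * ∑ s ∈ range T, c s ^ 2) := by
      rw [← mul_sum]
      gcongr
      exact sum_sum_Icc_window_le (fun s ↦ sq_nonneg (c s)) T k
    _ ≤ Real.sqrt T / 2 * (k * (α ^ 2 * Real.log (1 + v0⁻¹ * ∑ t ∈ Icc 1 T, a t ^ 2))) := by
      gcongr
    _ = _ := by ring

/-- With `c_s = α a_s / √(v₀ + ∑_{j=1}^s a_j²)` for `s ≥ 1` and `c_s = 0`
for `s ≤ 0` (here `c 0 = 0` and natural subtraction truncates the summation range at `0`),
`∑_{t=1}^T (√t/(2k)) (∑_{s=t−k}^{t−1} c_s)² ≤ (√T k α²/2) log(1 + v₀⁻¹ ∑_{t=1}^T a_t²)`. -/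
theorem stmt18 (T k : ℕ) (hT : 1 ≤ T) (hk : 1 ≤ k)
    (a : ℕ → ℝ) (ha : ∀ t, 1 ≤ t → t ≤ T → 0 ≤ a t)
    (v0 α : ℝ) (hv0 : 0 < v0) (hα : 0 < α)
    (c : ℕ → ℝ) (hc0 : c 0 = 0)
    (hc : ∀ s, 1 ≤ s →
      c s = α * a s / Real.sqrt (v0 + ∑ j ∈ Finset.Icc 1 s, (a j) ^ 2)) :
    ∑ t ∈ Finset.Icc 1 T, (Real.sqrt t / (2 * k)) * (∑ s ∈ Finset.Icc (t - k) (t - 1), c s) ^ 2 ≤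
      (Real.sqrt T * k * α ^ 2 / 2) *
        Real.log (1 + v0⁻¹ * ∑ t ∈ Finset.Icc 1 T, (a t) ^ 2) :=
  stmt18_general T k a v0 α hv0 c hc0 hc
end

section
/- Let Θ ⊆ ℝ^p be a nonempty closed convex set and let f : ℝ^p → ℝ be differentiable with ρ-Lipschitz gradient, i.e., ‖∇f(x) − ∇f(y)‖ ≤ ρ‖x − y‖ for all x, y. Let θ ∈ Θ, let g ∈ ℝ^p, and define θ⁺ = proj_Θ(θ − g) and θ̃ = proj_Θ(θ − ∇f(θ)). Then the infimum over u ∈ N_Θ(θ⁺) of ‖∇f(θ⁺) + u‖ is at most (1 + ρ)‖θ − θ̃‖ + (2 + ρ)‖g − ∇f(θ)‖. -/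
/-!
The normal cone at `θ⁺ = proj_Θ(θ - g)` contains `u = (θ - g) - θ⁺`, so the infimum is at most
`‖∇f(θ⁺) + u‖ ≤ ‖∇f(θ⁺) - ∇f(θ)‖ + ‖∇f(θ) - g‖ + ‖θ - θ⁺‖ ≤ (1 + ρ)‖θ - θ⁺‖ + ‖g - ∇f(θ)‖`.
Since `proj_Θ` is nonexpansive, `‖θ̃ - θ⁺‖ ≤ ‖g - ∇f(θ)‖`, hence
`‖θ - θ⁺‖ ≤ ‖θ - θ̃‖ + ‖g - ∇f(θ)‖`.
-/

open scoped InnerProductSpace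

section NearestPoint

variable {E : Type*} [NormedAddCommGroup E] [InnerProductSpace ℝ E] {s : Set E}

theorem real_inner_sub_le_zero_of_forall_dist_le (hs : Convex ℝ s) {x z : E} (hz : z ∈ s)
    (hmin : ∀ y ∈ s, dist x z ≤ dist x y) : ∀ y ∈ s, ⟪x - z, y - z⟫_ℝ ≤ 0 := by
  have : Nonempty s := ⟨⟨z, hz⟩⟩
  rw [← norm_eq_iInf_iff_real_inner_le_zero hs hz]
  have hbdd : BddBelow (Set.range fun y : s => ‖x - y‖) := by
    refine ⟨0, ?_⟩
    rintro r ⟨y, rfl⟩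
    exact norm_nonneg _
  refine le_antisymm (le_ciInf fun y => ?_) (ciInf_le hbdd ⟨z, hz⟩)
  simpa only [dist_eq_norm] using hmin y y.2

theorem norm_sub_le_of_forall_dist_le_s19 (hs : Convex ℝ s) {x₁ x₂ z₁ z₂ : E}
    (hz₁ : z₁ ∈ s) (hz₂ : z₂ ∈ s)
    (hmin₁ : ∀ y ∈ s, dist x₁ z₁ ≤ dist x₁ y) (hmin₂ : ∀ y ∈ s, dist x₂ z₂ ≤ dist x₂ y) :
    ‖z₁ - z₂‖ ≤ ‖x₁ - x₂‖ := by
  have h₁ := real_inner_sub_le_zero_of_forall_dist_le hs hz₁ hmin₁ z₂ hz₂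
  have h₂ := real_inner_sub_le_zero_of_forall_dist_le hs hz₂ hmin₂ z₁ hz₁
  have hsq : ‖z₁ - z₂‖ ^ 2 ≤ ⟪x₁ - x₂, z₁ - z₂⟫_ℝ := by
    have e₁ : z₂ - z₁ = -(z₁ - z₂) := (neg_sub _ _).symm
    have e₂ : x₁ - x₂ = (x₁ - z₁) - (x₂ - z₂) + (z₁ - z₂) := by abel
    rw [e₁, inner_neg_right] at h₁
    rw [e₂, inner_add_left, inner_sub_left, real_inner_self_eq_norm_sq]
    linarith
  have hcs := real_inner_le_norm (x₁ - x₂) (z₁ - z₂)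
  nlinarith [norm_nonneg (z₁ - z₂), norm_nonneg (x₁ - x₂)]

end NearestPoint

theorem nonneg_of_forall_norm_sub_le_mul {E F : Type*} [NormedAddCommGroup E] [Nontrivial E]
    [SeminormedAddCommGroup F] {φ : E → F} {ρ : ℝ} (h : ∀ x y, ‖φ x - φ y‖ ≤ ρ * ‖x - y‖) :
    0 ≤ ρ := by
  obtain ⟨x, hx⟩ := exists_ne (0 : E)
  have hpos : 0 < ‖x - 0‖ := by simpa using hx
  exact nonneg_of_mul_nonneg_left ((norm_nonneg _).trans (h x 0)) hpos

theorem stmt19_general (p : ℕ) (Θ : Set (EuclideanSpace ℝ (Fin p)))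
    (hconv : Convex ℝ Θ)
    (f : EuclideanSpace ℝ (Fin p) → ℝ)
    (ρ : ℝ) (hlip : ∀ x y, ‖gradient f x - gradient f y‖ ≤ ρ * ‖x - y‖)
    (θ : EuclideanSpace ℝ (Fin p)) (g : EuclideanSpace ℝ (Fin p))
    (θp : EuclideanSpace ℝ (Fin p)) (hθp : θp ∈ Θ)
    (hproj : ∀ y ∈ Θ, dist (θ - g) θp ≤ dist (θ - g) y)
    (θt : EuclideanSpace ℝ (Fin p)) (hθt : θt ∈ Θ)
    (hproj2 : ∀ y ∈ Θ, dist (θ - gradient f θ) θt ≤ dist (θ - gradient f θ) y) :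
    sInf {r : ℝ | ∃ u, (∀ y ∈ Θ, ⟪u, y - θp⟫_ℝ ≤ 0) ∧ r = ‖gradient f θp + u‖} ≤
      (1 + ρ) * ‖θ - θt‖ + (2 + ρ) * ‖g - gradient f θ‖ := by
  have hnormal := real_inner_sub_le_zero_of_forall_dist_le hconv hθp hproj
  refine csInf_le_of_le ⟨0, ?_⟩ ⟨(θ - g) - θp, hnormal, rfl⟩ ?_
  · rintro r ⟨u, -, rfl⟩
    exact norm_nonneg _
  -- `hlip` forces `0 ≤ ρ` only when the space is nontrivial.
  rcases subsingleton_or_nontrivial (EuclideanSpace ℝ (Fin p)) with hE | hE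
  · simp [Subsingleton.elim _ (0 : EuclideanSpace ℝ (Fin p))]
  have hρ := nonneg_of_forall_norm_sub_le_mul hlip
  have hnonexp : ‖θt - θp‖ ≤ ‖g - gradient f θ‖ := by
    simpa [norm_sub_rev] using norm_sub_le_of_forall_dist_le_s19 hconv hθt hθp hproj2 hproj
  have hdist : ‖θ - θp‖ ≤ ‖θ - θt‖ + ‖g - gradient f θ‖ :=
    (norm_sub_le_norm_sub_add_norm_sub θ θt θp).trans (by linarith)
  calc ‖gradient f θp + ((θ - g) - θp)‖
      = ‖(gradient f θp - gradient f θ) + (gradient f θ - g) + (θ - θp)‖ := by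
        congr 1; abel
    _ ≤ ρ * ‖θp - θ‖ + ‖g - gradient f θ‖ + ‖θ - θp‖ := by
        refine norm_add₃_le.trans ?_
        rw [norm_sub_rev (gradient f θ)]
        gcongr
        exact hlip θp θ
    _ = (1 + ρ) * ‖θ - θp‖ + ‖g - gradient f θ‖ := by rw [norm_sub_rev θp]; ring
    _ ≤ (1 + ρ) * ‖θ - θt‖ + (2 + ρ) * ‖g - gradient f θ‖ := by
        nlinarith [norm_nonneg (g - gradient f θ)]

/-- For `f` differentiable with `ρ`-Lipschitz gradient, `θ ∈ Θ` (nonempty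
closed convex), `θ⁺ = proj_Θ(θ − g)` and `θ̃ = proj_Θ(θ − ∇f(θ))`, the infimum over
`u ∈ N_Θ(θ⁺)` of `‖∇f(θ⁺) + u‖` is at most `(1 + ρ)‖θ − θ̃‖ + (2 + ρ)‖g − ∇f(θ)‖`. -/
theorem stmt19 (p : ℕ) (Θ : Set (EuclideanSpace ℝ (Fin p))) (hne : Θ.Nonempty)
    (hcl : IsClosed Θ) (hconv : Convex ℝ Θ)
    (f : EuclideanSpace ℝ (Fin p) → ℝ) (hf : Differentiable ℝ f)
    (ρ : ℝ) (hlip : ∀ x y, ‖gradient f x - gradient f y‖ ≤ ρ * ‖x - y‖)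
    (θ : EuclideanSpace ℝ (Fin p)) (hθ : θ ∈ Θ) (g : EuclideanSpace ℝ (Fin p))
    (θp : EuclideanSpace ℝ (Fin p)) (hθp : θp ∈ Θ)
    (hproj : ∀ y ∈ Θ, dist (θ - g) θp ≤ dist (θ - g) y)
    (θt : EuclideanSpace ℝ (Fin p)) (hθt : θt ∈ Θ)
    (hproj2 : ∀ y ∈ Θ, dist (θ - gradient f θ) θt ≤ dist (θ - gradient f θ) y) :
    sInf {r : ℝ | ∃ u, (∀ y ∈ Θ, ⟪u, y - θp⟫_ℝ ≤ 0) ∧ r = ‖gradient f θp + u‖} ≤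
      (1 + ρ) * ‖θ - θt‖ + (2 + ρ) * ‖g - gradient f θ‖ :=
  stmt19_general p Θ hconv f ρ hlip θ g θp hθp hproj θt hθt hproj2
end
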